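/- Let G be a nontrivial connected graph of order n. Then γ_{tR2}(G) = n if and only if G ∈ {K_2, K_{1,2}} or every vertex of G is either a leaf or a weak support vertex (a vertex adjacent to exactly one leaf). -/

import Mathlib

/-- `f` is a total Roman {2}-dominating function on `G`. -/
def IsTR2DF {V : Type*} (G : SimpleGraph V) (f : V → ℕ) : Prop :=
  (∀ v, f v ≤ 2) ∧
  (∀ v, f v = 0 →
    (∃ u, G.Adj u v ∧ f u = 2) ∨
    (∃ x y, x ≠ y ∧ G.Adj x v ∧ G.Adj y v ∧ f x = 1 ∧ f y = 1)) ∧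
  (∀ v, 0 < f v → ∃ u, G.Adj u v ∧ 0 < f u)

/-- The total Roman {2}-domination number of `G`. -/
noncomputable def tR2 {V : Type*} [Fintype V] (G : SimpleGraph V) : ℕ :=
  sInf {w | ∃ f : V → ℕ, IsTR2DF G f ∧ ∑ v, f v = w}

/-!
The constant function `1` is a TR2DF of any graph without isolated vertices, so `tR2 G = n`
exactly when every TR2DF has weight at least `n`. A leaf `l` with neighbour `u` forces
`f l + f u ≥ 2`. If every vertex is a leaf or a weak support vertex, pairing each vertex with its
leaf partner is an involution, and summing these inequalities gives weight at least `n`; the same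
two leaf edges of `P₃` together with totality at its centre give weight at least `3`.

Conversely, a vertex `v` of degree at least `2` with no leaf neighbour lets one put `0` on `v`
and `1` elsewhere; if `v` has two leaf neighbours `l₁, l₂` and another neighbour, put `2` on `v`,
`0` on `l₁, l₂` and `1` elsewhere. If `v` has no other neighbour, connectivity makes `G = P₃`.
-/

open SimpleGraph

section

variable {V W : Type*}

theorem Function.Involutive.card_le_sum [Fintype V] {σ : V → V} (hσ : Function.Involutive σ)
    {f : V → ℕ} (h : ∀ v, 2 ≤ f v + f (σ v)) : Fintype.card V ≤ ∑ v, f v := by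
  have hsum : ∑ v, f (σ v) = ∑ v, f v := Equiv.sum_comp hσ.toPerm f
  have hle : ∑ _v : V, 2 ≤ ∑ v, (f v + f (σ v)) := Finset.sum_le_sum fun v _ => h v
  rw [Finset.sum_add_distrib, hsum, Finset.sum_const, Finset.card_univ, smul_eq_mul] at hle
  omega

namespace SimpleGraph

variable {G : SimpleGraph V}

theorem Preconnected.mem_of_adj_closed (hG : G.Preconnected) {S : Set V}
    (hS : ∀ x y, G.Adj x y → x ∈ S → y ∈ S) {a : V} (ha : a ∈ S) (x : V) : x ∈ S := by
  obtain ⟨p⟩ := hG a x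
  induction p with
  | nil => exact ha
  | cons hxy _ ih => exact ih (hS _ _ hxy ha)

theorem nonempty_iso_pathGraph_three {a b c : V} (hab : G.Adj a b) (hbc : G.Adj b c)
    (hac : a ≠ c) (hnac : ¬ G.Adj a c) (hV : ∀ x, x = a ∨ x = b ∨ x = c) :
    Nonempty (G ≃g pathGraph 3) := by
  have hbij : Function.Bijective ![a, b, c] := by
    refine ⟨fun i j hij => ?_, fun x => ?_⟩
    · fin_cases i <;> fin_cases j <;>
        simp_all [hab.ne, hbc.ne, hab.ne.symm, hbc.ne.symm, hac.symm]
    · rcases hV x with rfl | rfl | rfl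
      exacts [⟨0, rfl⟩, ⟨1, rfl⟩, ⟨2, rfl⟩]
  have hnca : ¬ G.Adj c a := fun h => hnac h.symm
  refine ⟨RelIso.symm ⟨Equiv.ofBijective _ hbij, fun {i j} => ?_⟩⟩
  fin_cases i <;> fin_cases j <;> simp [pathGraph_adj, hab, hbc, hab.symm, hbc.symm, hnac, hnca]

end SimpleGraph

section TotalRomanTwo

variable {G : SimpleGraph V}

theorem isTR2DF_one (hG : ∀ v, ∃ u, G.Adj v u) : IsTR2DF G fun _ => 1 :=
  ⟨fun _ => by norm_num, fun _ h => absurd h one_ne_zero,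
    fun v _ => (hG v).imp fun _ hu => ⟨hu.symm, one_pos⟩⟩

theorem IsTR2DF.comp_iso {H : SimpleGraph W} {f : W → ℕ} (hf : IsTR2DF H f) (e : G ≃g H) :
    IsTR2DF G (f ∘ e) := by
  refine ⟨fun v => hf.1 (e v), fun v hv => ?_, fun v hv => ?_⟩
  · rcases hf.2.1 (e v) hv with ⟨u, hu, hu2⟩ | ⟨x, y, hxy, hx, hy, hx1, hy1⟩
    · exact .inl ⟨e.symm u, by rwa [← e.map_adj_iff, e.apply_symm_apply], by simpa⟩
    · refine .inr ⟨e.symm x, e.symm y, by simpa, ?_, ?_, by simpa, by simpa⟩ <;>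
        rwa [← e.map_adj_iff, e.apply_symm_apply]
  · obtain ⟨u, hu, hpos⟩ := hf.2.2 (e v) hv
    exact ⟨e.symm u, by rwa [← e.map_adj_iff, e.apply_symm_apply], by simpa⟩

theorem IsTR2DF.two_le_add_of_forall_adj_eq {f : V → ℕ} (hf : IsTR2DF G f) {l u : V}
    (hl : ∀ w, G.Adj w l → w = u) : 2 ≤ f l + f u := by
  rcases Nat.eq_zero_or_pos (f l) with h0 | hpos
  · rcases hf.2.1 l h0 with ⟨w, hw, hw2⟩ | ⟨x, y, hxy, hx, hy, -, -⟩
    · rw [← hl w hw]; omega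
    · exact absurd ((hl x hx).trans (hl y hy).symm) hxy
  · obtain ⟨w, hw, hwpos⟩ := hf.2.2 l hpos
    rw [← hl w hw]; omega

variable [Fintype V]

theorem tR2_le_sum {f : V → ℕ} (hf : IsTR2DF G f) : tR2 G ≤ ∑ v, f v :=
  Nat.sInf_le ⟨f, hf, rfl⟩

theorem tR2_eq_card_iff (hG : ∀ v, ∃ u, G.Adj v u) :
    tR2 G = Fintype.card V ↔ ∀ f, IsTR2DF G f → Fintype.card V ≤ ∑ v, f v := by
  refine ⟨fun h f hf => h ▸ tR2_le_sum hf, fun h => le_antisymm ?_ ?_⟩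
  · simpa using tR2_le_sum (isTR2DF_one hG)
  · refine le_csInf ⟨_, _, isTR2DF_one hG, rfl⟩ ?_
    rintro _ ⟨f, hf, rfl⟩
    exact h f hf

theorem card_le_sum_of_iso [Fintype W] {H : SimpleGraph W} (e : G ≃g H)
    (hH : ∀ g, IsTR2DF H g → Fintype.card W ≤ ∑ w, g w) {f : V → ℕ} (hf : IsTR2DF G f) :
    Fintype.card V ≤ ∑ v, f v := by
  rw [Fintype.card_congr e.toEquiv, ← Equiv.sum_comp e.symm.toEquiv]
  exact hH _ (hf.comp_iso e.symm)

theorem two_le_sum_of_isTR2DF_pathGraph_two {f : Fin 2 → ℕ} (hf : IsTR2DF (pathGraph 2) f) :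
    2 ≤ ∑ i, f i := by
  simpa [Fin.sum_univ_two] using
    hf.two_le_add_of_forall_adj_eq (l := 0) (u := 1) (by simp [pathGraph_adj, Fin.forall_fin_succ])

theorem three_le_sum_of_isTR2DF_pathGraph_three {f : Fin 3 → ℕ}
    (hf : IsTR2DF (pathGraph 3) f) : 3 ≤ ∑ i, f i := by
  have h0 := hf.two_le_add_of_forall_adj_eq (l := 0) (u := 1)
    (by simp [pathGraph_adj, Fin.forall_fin_succ])
  have h2 := hf.two_le_add_of_forall_adj_eq (l := 2) (u := 1)
    (by simp [pathGraph_adj, Fin.forall_fin_succ])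
  have h1 : f 1 = 2 → 0 < f 0 + f 2 := fun h => by
    obtain ⟨u, hu, hpos⟩ := hf.2.2 1 (by omega)
    fin_cases u <;> simp_all [pathGraph_adj]
  have := hf.1 1
  rw [Fin.sum_univ_three]
  omega

end TotalRomanTwo

section Leaves

variable [Fintype V] {G : SimpleGraph V} [DecidableRel G.Adj]

theorem card_le_sum_of_forall_degree_eq_one_or_existsUnique
    (h : ∀ v, G.degree v = 1 ∨ ∃! u, G.Adj v u ∧ G.degree u = 1) {f : V → ℕ}
    (hf : IsTR2DF G f) : Fintype.card V ≤ ∑ v, f v := by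
  set partner : V → V → Prop := fun v u => G.Adj v u ∧ (G.degree v = 1 ∨ G.degree u = 1)
  have hpartner : ∀ v, ∃! u, partner v u := by
    intro v
    by_cases hv : G.degree v = 1
    · obtain ⟨u, hu, huniq⟩ := degree_eq_one_iff_existsUnique_adj.mp hv
      exact ⟨u, ⟨hu, .inl hv⟩, fun w hw => huniq w hw.1⟩
    · obtain ⟨u, hu, huniq⟩ := (h v).resolve_left hv
      exact ⟨u, ⟨hu.1, .inr hu.2⟩, fun w hw => huniq w ⟨hw.1, hw.2.resolve_left hv⟩⟩
  choose σ hσ hσuniq using hpartner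
  refine Function.Involutive.card_le_sum
    (fun v => (hσuniq _ _ ⟨(hσ v).1.symm, (hσ v).2.symm⟩).symm) fun v => ?_
  rcases (hσ v).2 with hv | hu
  · exact hf.two_le_add_of_forall_adj_eq fun w hw =>
      (degree_eq_one_iff_existsUnique_adj.mp hv).unique hw.symm (hσ v).1
  · rw [add_comm]
    exact hf.two_le_add_of_forall_adj_eq fun w hw =>
      (degree_eq_one_iff_existsUnique_adj.mp hu).unique hw.symm (hσ v).1.symm

theorem exists_isTR2DF_sum_lt_card_of_forall_adj_degree_ne_one (hG : ∀ v, ∃ u, G.Adj v u)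
    {v : V} (hv : 2 ≤ G.degree v) (hleaf : ∀ u, G.Adj v u → G.degree u ≠ 1) :
    ∃ f, IsTR2DF G f ∧ ∑ x, f x < Fintype.card V := by
  classical
  set f : V → ℕ := fun x => if x = v then 0 else 1 with hf
  refine ⟨f, ⟨fun x => by simp only [hf]; split_ifs <;> omega, fun x hx => ?_, fun x _ => ?_⟩, ?_⟩
  · obtain rfl : x = v := by by_contra h; simp [hf, h] at hx
    obtain ⟨a, ha, b, hb, hab⟩ := Finset.one_lt_card.mp hv
    rw [mem_neighborFinset] at ha hb
    exact .inr ⟨a, b, hab, ha.symm, hb.symm, by simp [hf, ha.ne'], by simp [hf, hb.ne']⟩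
  · -- `x` is not a leaf hanging at `v`, so it has a neighbour other than `v`
    obtain ⟨u, hxu, huv⟩ : ∃ u, G.Adj x u ∧ u ≠ v := by
      by_contra! hc
      obtain ⟨u, hu⟩ := hG x
      obtain rfl := hc u hu
      exact hleaf x hu.symm (degree_eq_one_iff_existsUnique_adj.mpr ⟨u, hu, hc⟩)
    exact ⟨u, hxu.symm, by simp [hf, huv]⟩
  · calc ∑ x, f x < ∑ _x : V, 1 :=
          Finset.sum_lt_sum (fun x _ => by simp only [hf]; split_ifs <;> omega)
            ⟨v, Finset.mem_univ v, by simp [hf]⟩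
      _ = Fintype.card V := by simp

variable {v l₁ l₂ : V}

theorem exists_isTR2DF_sum_lt_card_of_two_leaves (hG : ∀ v, ∃ u, G.Adj v u)
    (hl₁ : G.Adj v l₁) (hl₂ : G.Adj v l₂) (h₁ : G.degree l₁ = 1) (h₂ : G.degree l₂ = 1)
    (hne : l₁ ≠ l₂) (hv : 3 ≤ G.degree v) :
    ∃ f, IsTR2DF G f ∧ ∑ x, f x < Fintype.card V := by
  classical
  set f : V → ℕ := fun x => if x = v then 2 else if x = l₁ ∨ x = l₂ then 0 else 1 with hf
  have hv₁ := hl₁.ne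
  have hv₂ := hl₂.ne
  have hpos : ∀ x, 0 < f x ↔ x ≠ l₁ ∧ x ≠ l₂ := by
    intro x; simp only [hf]; split_ifs <;> grind
  refine ⟨f, ⟨fun x => by simp only [hf]; split_ifs <;> omega, fun x hx => ?_, fun x hx => ?_⟩, ?_⟩
  · have hx' : x = l₁ ∨ x = l₂ := by by_contra! h; exact absurd hx ((hpos x).2 h).ne'
    exact .inl ⟨v, by rcases hx' with rfl | rfl <;> assumption, by simp [hf]⟩
  · obtain ⟨hx₁, hx₂⟩ := (hpos x).1 hx
    by_cases hxv : x = v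
    · subst hxv
      obtain ⟨u, hu, hul⟩ := Finset.exists_mem_notMem_of_card_lt_card
        (s := ({l₁, l₂} : Finset V)) (t := G.neighborFinset x)
        (by rw [Finset.card_pair hne, card_neighborFinset_eq_degree]; omega)
      simp only [Finset.mem_insert, Finset.mem_singleton, not_or] at hul
      exact ⟨u, ((G.mem_neighborFinset _ _).1 hu).symm, (hpos u).2 hul⟩
    · obtain ⟨u, hu⟩ := hG x
      have hleaf : ∀ {l}, G.degree l = 1 → G.Adj v l → u ≠ l := by
        rintro l hl hvl rfl
        exact hxv ((degree_eq_one_iff_existsUnique_adj.mp hl).unique hu.symm hvl.symm)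
      exact ⟨u, hu.symm, (hpos u).2 ⟨hleaf h₁ hl₁, hleaf h₂ hl₂⟩⟩
  · have key : ∀ x, f x + ((if x = l₁ then 1 else 0) + (if x = l₂ then 1 else 0)) =
        1 + (if x = v then 1 else 0) := by
      intro x; simp only [hf]; split_ifs <;> grind
    have hsum := Finset.sum_congr rfl fun x (_ : x ∈ Finset.univ) => key x
    simp only [Finset.sum_add_distrib, Finset.sum_ite_eq', Finset.mem_univ, if_true,
      Finset.sum_const, Finset.card_univ, smul_eq_mul, mul_one] at hsum
    omega

theorem nonempty_iso_pathGraph_three_of_two_leaves (hG : G.Preconnected)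
    (hl₁ : G.Adj v l₁) (hl₂ : G.Adj v l₂) (h₁ : G.degree l₁ = 1) (h₂ : G.degree l₂ = 1)
    (hne : l₁ ≠ l₂) (hv : G.degree v = 2) : Nonempty (G ≃g pathGraph 3) := by
  classical
  have hu₁ : ∀ w, G.Adj l₁ w → w = v :=
    fun w hw => (degree_eq_one_iff_existsUnique_adj.mp h₁).unique hw hl₁.symm
  have hu₂ : ∀ w, G.Adj l₂ w → w = v :=
    fun w hw => (degree_eq_one_iff_existsUnique_adj.mp h₂).unique hw hl₂.symm
  have hnbr : G.neighborFinset v = {l₁, l₂} :=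
    (Finset.eq_of_subset_of_card_le (by simp [Finset.insert_subset_iff, hl₁, hl₂])
      (by rw [Finset.card_pair hne, card_neighborFinset_eq_degree, hv])).symm
  have hclosed : ∀ x y, G.Adj x y → x ∈ ({l₁, v, l₂} : Set V) → y ∈ ({l₁, v, l₂} : Set V) := by
    rintro x y hxy (rfl | rfl | rfl)
    · simp [hu₁ y hxy]
    · have : y ∈ G.neighborFinset x := (G.mem_neighborFinset _ _).2 hxy
      rw [hnbr] at this
      simp only [Finset.mem_insert, Finset.mem_singleton] at this
      rcases this with rfl | rfl <;> simp
    · simp [hu₂ y hxy]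
  exact nonempty_iso_pathGraph_three hl₁.symm hl₂ hne (fun h => hl₂.ne (hu₁ _ h).symm)
    fun x => by simpa using hG.mem_of_adj_closed hclosed (a := v) (by simp) x

theorem exists_isTR2DF_sum_lt_card [Nontrivial V] (hG : G.Connected)
    (hP₃ : ¬ Nonempty (G ≃g pathGraph 3))
    (hv₁ : G.degree v ≠ 1) (hv : ¬ ∃! u, G.Adj v u ∧ G.degree u = 1) :
    ∃ f, IsTR2DF G f ∧ ∑ x, f x < Fintype.card V := by
  have hadj := hG.preconnected.exists_adj_of_nontrivial
  have hv₂ : 2 ≤ G.degree v := by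
    have := (G.degree_pos_iff_exists_adj v).2 (hadj v)
    omega
  by_cases hleaf : ∃ u, G.Adj v u ∧ G.degree u = 1
  · obtain ⟨l₁, hl₁, h₁⟩ := hleaf
    obtain ⟨l₂, ⟨hl₂, h₂⟩, hne⟩ : ∃ l₂, (G.Adj v l₂ ∧ G.degree l₂ = 1) ∧ l₂ ≠ l₁ := by
      by_contra! hc
      exact hv ⟨l₁, ⟨hl₁, h₁⟩, hc⟩
    rcases hv₂.eq_or_lt with hdeg₂ | hdeg₃
    · exact absurd (nonempty_iso_pathGraph_three_of_two_leaves hG.preconnected hl₁ hl₂ h₁ h₂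
        hne.symm hdeg₂.symm) hP₃
    · exact exists_isTR2DF_sum_lt_card_of_two_leaves hadj hl₁ hl₂ h₁ h₂ hne.symm hdeg₃
  · push Not at hleaf
    exact exists_isTR2DF_sum_lt_card_of_forall_adj_degree_ne_one hadj hv₂ hleaf

end Leaves

end

theorem stmt10 {V : Type*} [Fintype V] (G : SimpleGraph V) [DecidableRel G.Adj]
    (hconn : G.Connected) (hnt : Nontrivial V) :
    tR2 G = Fintype.card V ↔
      (Nonempty (G ≃g SimpleGraph.pathGraph 2) ∨
       Nonempty (G ≃g SimpleGraph.pathGraph 3) ∨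
       ∀ v : V, G.degree v = 1 ∨ (∃! u : V, G.Adj v u ∧ G.degree u = 1)) := by
  rw [tR2_eq_card_iff hconn.preconnected.exists_adj_of_nontrivial]
  constructor
  · intro hlow
    refine .inr (or_iff_not_imp_left.2 fun hP₃ v =>
      or_iff_not_imp_left.2 fun hv₁ => by_contra fun hv => ?_)
    obtain ⟨f, hf, hlt⟩ := exists_isTR2DF_sum_lt_card hconn hP₃ hv₁ hv
    exact (hlow f hf).not_gt hlt
  · rintro (⟨⟨e⟩⟩ | ⟨⟨e⟩⟩ | h) f hf
    · exact card_le_sum_of_iso e (fun g hg => by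
        simpa using two_le_sum_of_isTR2DF_pathGraph_two hg) hf
    · exact card_le_sum_of_iso e (fun g hg => by
        simpa using three_le_sum_of_isTR2DF_pathGraph_three hg) hf
    · exact card_le_sum_of_forall_degree_eq_one_or_existsUnique h hf
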